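/- Fix integers m ≥ 2 and n ≥ 1, and let μ_m denote the set of m-th roots of unity in ℂ. Let P_n be the poset (ordered by inclusion) of nonempty sets of the form {α_1·e_{i_1},…,α_k·e_{i_k}} with α_j ∈ μ_m, 1 ≤ i_1 < ⋯ < i_k ≤ n, and 1 ≤ k ≤ n-1, where e_i are the standard basis vectors of ℂ^n. Let t be the linear map of ℂ^n swapping e_{n-1} and e_n and fixing the other basis vectors. Then the subposet P_n^t of sets X ∈ P_n with t(X) = X is order-isomorphic to P_{n-1}, via X ↦ X \ ℂe_n. -/

import Mathlib

/-!
Read "the indices `i_j` are distinct" as: every coordinate line `ℂ e_i` meets `X` in at most one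
point. If `t(X) = X`, then `X` contains `α e_{n-1}` exactly when it contains `α e_n`, so deleting
the points on the last axis loses nothing: extending by zero and adding back the `t`-images
recovers `X`. The bound `k ≤ n - 2` for `X \ ℂ e_n` holds because either some point was deleted,
or `X` meets neither of the last two axes.
-/

open Set Function

/-- The poset `P_N` of nonempty sets `{α₁·e_{i₁}, …, α_k·e_{i_k}}` in `ℂ^N`, where the
`α_j` are `m`-th roots of unity, the indices `i_j` are pairwise distinct, and
`1 ≤ k ≤ N - 1`.  (Ordered by inclusion of sets.) -/
def monoPoset (m N : ℕ) : Set (Set (Fin N → ℂ)) :=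
  {X | X.Nonempty ∧ X.Finite ∧ X.ncard ≤ N - 1 ∧
    (∀ v ∈ X, ∃ (α : ℂ) (i : Fin N), α ^ m = 1 ∧ v = α • (Pi.single i 1 : Fin N → ℂ)) ∧
    (∀ v ∈ X, ∀ w ∈ X, ∀ (α β : ℂ) (i : Fin N),
      v = α • (Pi.single i 1 : Fin N → ℂ) → w = β • (Pi.single i 1 : Fin N → ℂ) → v = w)}

section Axes

variable {ι κ : Type*} [DecidableEq ι] [DecidableEq κ]

def axisLine (i : ι) : Set (ι → ℂ) := {w | ∃ c : ℂ, w = c • Pi.single i 1}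

def rootMonomials (m : ℕ) : Set (ι → ℂ) :=
  {v | ∃ (α : ℂ) (i : ι), α ^ m = 1 ∧ v = α • Pi.single i 1}

def OnePerAxis (X : Set (ι → ℂ)) : Prop := ∀ i, (X ∩ axisLine i).Subsingleton

lemma smul_single_mem_axisLine (c : ℂ) (i : ι) : c • (Pi.single i 1 : ι → ℂ) ∈ axisLine i :=
  ⟨c, rfl⟩

lemma smul_single_mem_axisLine_iff {c : ℂ} (hc : c ≠ 0) {i j : ι} :
    c • (Pi.single i 1 : ι → ℂ) ∈ axisLine j ↔ i = j := by
  refine ⟨fun ⟨d, h⟩ => ?_, fun h => h ▸ smul_single_mem_axisLine c i⟩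
  by_contra hij
  simpa [hij, hc] using congrFun h i

lemma exists_eq_smul_single_of_mem_axisLine {m : ℕ} (hm : m ≠ 0) {v : ι → ℂ}
    (hv : v ∈ rootMonomials m) {i : ι} (hvi : v ∈ axisLine i) :
    ∃ α : ℂ, α ^ m = 1 ∧ α ≠ 0 ∧ v = α • Pi.single i 1 := by
  obtain ⟨α, j, hα, rfl⟩ := hv
  have hα0 : α ≠ 0 := (IsUnit.of_pow_eq_one hα hm).ne_zero
  obtain rfl := (smul_single_mem_axisLine_iff hα0).1 hvi
  exact ⟨α, hα, hα0, rfl⟩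

lemma OnePerAxis.ncard_le {X : Set (ι → ℂ)} (hX : OnePerAxis X) {S : Finset ι}
    (hXS : X ⊆ ⋃ i ∈ S, axisLine i) : X.ncard ≤ S.card := by
  have hcover : X = ⋃ i ∈ S, X ∩ axisLine i := by rw [← inter_iUnion₂, inter_eq_left.2 hXS]
  calc X.ncard = (⋃ i ∈ S, X ∩ axisLine i).ncard := congrArg ncard hcover
    _ ≤ ∑ i ∈ S, (X ∩ axisLine i).ncard := S.set_ncard_biUnion_le _
    _ ≤ ∑ _i ∈ S, 1 := Finset.sum_le_sum fun i _ => (ncard_le_one (hX i).finite).2 (hX i)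
    _ = S.card := by simp

lemma smul_single_comp_equiv (c : ℂ) (σ : Equiv.Perm ι) (i : ι) :
    (c • Pi.single i 1 : ι → ℂ) ∘ σ = c • Pi.single (σ.symm i) 1 := by
  rw [← Pi.single_comp_equiv]
  rfl

lemma comp_equiv_mem_axisLine (σ : Equiv.Perm ι) {v : ι → ℂ} {i : ι} (hv : v ∈ axisLine i) :
    v ∘ σ ∈ axisLine (σ.symm i) := by
  obtain ⟨c, rfl⟩ := hv
  exact ⟨c, smul_single_comp_equiv c σ i⟩

variable {f : κ → ι}

lemma extend_smul_single (hf : Injective f) (c : ℂ) (j : κ) :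
    extend f (c • Pi.single j 1 : κ → ℂ) 0 = c • Pi.single (f j) 1 := by
  funext i
  by_cases hi : ∃ k, f k = i
  · obtain ⟨k, rfl⟩ := hi
    simp [hf.extend_apply, Pi.single_apply, hf.eq_iff]
  · rw [extend_apply' _ _ _ hi]
    simp [show i ≠ f j from fun h => hi ⟨j, h.symm⟩]

lemma smul_single_comp_of_injective (hf : Injective f) (c : ℂ) (j : κ) :
    (c • Pi.single (f j) 1 : ι → ℂ) ∘ f = c • Pi.single j 1 := by
  rw [← extend_smul_single hf, extend_comp hf]

lemma extend_mem_axisLine (hf : Injective f) {y : κ → ℂ} {j : κ} (hy : y ∈ axisLine j) :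
    extend f y 0 ∈ axisLine (f j) := by
  obtain ⟨c, rfl⟩ := hy
  exact ⟨c, extend_smul_single hf c j⟩

end Axes

section Reflection

variable {ι κ : Type*} [DecidableEq ι] {a b : ι} {f : κ → ι} {m : ℕ}

def deleteAxis (f : κ → ι) (b : ι) (X : Set (ι → ℂ)) : Set (κ → ℂ) :=
  (· ∘ f) '' (X \ axisLine b)

def symmetricExtension (f : κ → ι) (a b : ι) (Y : Set (κ → ℂ)) : Set (ι → ℂ) :=
  (extend f · 0) '' Y ∪ (· ∘ Equiv.swap a b) '' ((extend f · 0) '' Y)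

lemma comp_swap_involutive (a b : ι) : Involutive (· ∘ Equiv.swap a b : (ι → ℂ) → ι → ℂ) :=
  fun v => by ext; simp

lemma extend_comp_of_notMem_axisLine [DecidableEq κ] (hf : Injective f) (hrange : range f = {b}ᶜ)
    {v : ι → ℂ} (hv : v ∈ rootMonomials m) (hvb : v ∉ axisLine b) : extend f (v ∘ f) 0 = v := by
  obtain ⟨α, i, -, rfl⟩ := hv
  obtain ⟨j, rfl⟩ := hrange.superset fun (hib : i = b) => hvb (hib ▸ smul_single_mem_axisLine α i)
  rw [smul_single_comp_of_injective hf, extend_smul_single hf]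

lemma comp_swap_mem_sdiff_axisLine (hm : m ≠ 0) (hab : a ≠ b) {X : Set (ι → ℂ)}
    (hX : X ⊆ rootMonomials m) (hfix : (· ∘ Equiv.swap a b) '' X = X) {v : ι → ℂ} (hv : v ∈ X)
    (hvb : v ∈ axisLine b) : v ∘ Equiv.swap a b ∈ X \ axisLine b := by
  refine ⟨hfix ▸ mem_image_of_mem _ hv, ?_⟩
  obtain ⟨α, -, hα0, rfl⟩ := exists_eq_smul_single_of_mem_axisLine hm (hX hv) hvb
  rwa [smul_single_comp_equiv, Equiv.symm_swap, Equiv.swap_apply_right,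
    smul_single_mem_axisLine_iff hα0]

lemma deleteAxis_mono {X X' : Set (ι → ℂ)} (h : X ⊆ X') : deleteAxis f b X ⊆ deleteAxis f b X' :=
  image_mono (sdiff_subset_sdiff_left h)

lemma symmetricExtension_mono {Y Y' : Set (κ → ℂ)} (h : Y ⊆ Y') :
    symmetricExtension f a b Y ⊆ symmetricExtension f a b Y' :=
  union_subset_union (image_mono h) (image_mono (image_mono h))

lemma deleteAxis_nonempty (hm : m ≠ 0) (hab : a ≠ b) {X : Set (ι → ℂ)}
    (hX : X ⊆ rootMonomials m) (hfix : (· ∘ Equiv.swap a b) '' X = X) (hne : X.Nonempty) :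
    (deleteAxis f b X).Nonempty := by
  obtain ⟨v, hv⟩ := hne
  by_cases hvb : v ∈ axisLine b
  · exact ⟨_, mem_image_of_mem _ (comp_swap_mem_sdiff_axisLine hm hab hX hfix hv hvb)⟩
  · exact ⟨_, mem_image_of_mem _ ⟨hv, hvb⟩⟩

lemma deleteAxis_subset_rootMonomials [DecidableEq κ] (hf : Injective f) (hrange : range f = {b}ᶜ)
    {X : Set (ι → ℂ)} (hX : X ⊆ rootMonomials m) : deleteAxis f b X ⊆ rootMonomials m := by
  rintro _ ⟨v, ⟨hvX, hvb⟩, rfl⟩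
  obtain ⟨α, i, hα, rfl⟩ := hX hvX
  obtain ⟨j, rfl⟩ := hrange.superset fun (hib : i = b) => hvb (hib ▸ smul_single_mem_axisLine α i)
  exact ⟨α, j, hα, smul_single_comp_of_injective hf α j⟩

lemma onePerAxis_deleteAxis [DecidableEq κ] (hf : Injective f) (hrange : range f = {b}ᶜ)
    {X : Set (ι → ℂ)} (hX : X ⊆ rootMonomials m) (hsep : OnePerAxis X) :
    OnePerAxis (deleteAxis f b X) := by
  intro j
  rintro _ ⟨⟨v, hv, rfl⟩, hvj⟩ _ ⟨⟨w, hw, rfl⟩, hwj⟩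
  have hvj' := extend_mem_axisLine hf hvj
  have hwj' := extend_mem_axisLine hf hwj
  rw [extend_comp_of_notMem_axisLine hf hrange (hX hv.1) hv.2] at hvj'
  rw [extend_comp_of_notMem_axisLine hf hrange (hX hw.1) hw.2] at hwj'
  rw [hsep (f j) ⟨hv.1, hvj'⟩ ⟨hw.1, hwj'⟩]

lemma ncard_deleteAxis_add_ncard_inter [DecidableEq κ] (hf : Injective f) (hrange : range f = {b}ᶜ)
    {X : Set (ι → ℂ)} (hX : X ⊆ rootMonomials m) (hfin : X.Finite) :
    (deleteAxis f b X).ncard + (X ∩ axisLine b).ncard = X.ncard := by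
  have hinj : InjOn (· ∘ f) (X \ axisLine b) :=
    LeftInvOn.injOn (f₁' := (extend f · (0 : ι → ℂ))) fun v hv =>
      extend_comp_of_notMem_axisLine hf hrange (hX hv.1) hv.2
  rw [deleteAxis, hinj.ncard_image, add_comm, ncard_inter_add_ncard_sdiff_eq_ncard X _ hfin]

lemma ncard_deleteAxis_le [Fintype ι] [DecidableEq κ] (hf : Injective f) (hrange : range f = {b}ᶜ)
    (hab : a ≠ b) {X : Set (ι → ℂ)} (hX : X ⊆ rootMonomials m) (hsep : OnePerAxis X)
    (hfix : (· ∘ Equiv.swap a b) '' X = X) (hfin : X.Finite)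
    (hcard : X.ncard ≤ Fintype.card ι - 1) :
    (deleteAxis f b X).ncard ≤ Fintype.card ι - 2 := by
  have hsplit := ncard_deleteAxis_add_ncard_inter hf hrange hX hfin
  rcases (X ∩ axisLine b).eq_empty_or_nonempty with hXb | hXb
  · have hcover : X ⊆ ⋃ i ∈ (Finset.univ \ {a, b} : Finset ι), axisLine i := by
      intro v hv
      obtain ⟨α, i, -, rfl⟩ := hX hv
      have hib : i ≠ b := fun h => hXb.subset ⟨hv, h ▸ smul_single_mem_axisLine α i⟩
      have hia : i ≠ a := by
        rintro rfl
        refine hXb.subset ⟨hfix ▸ mem_image_of_mem _ hv, ?_⟩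
        rw [smul_single_comp_equiv, Equiv.symm_swap, Equiv.swap_apply_left]
        exact smul_single_mem_axisLine α b
      exact mem_biUnion (by simp [hia, hib]) (smul_single_mem_axisLine α i)
    have := hsep.ncard_le hcover
    rw [Finset.card_univ_sdiff, Finset.card_pair hab] at this
    omega
  · have := (ncard_pos (hfin.inter_of_left _)).2 hXb
    omega

lemma swap_image_symmetricExtension (Y : Set (κ → ℂ)) :
    (· ∘ Equiv.swap a b) '' symmetricExtension f a b Y = symmetricExtension f a b Y := by
  rw [symmetricExtension, image_union,
    ((comp_swap_involutive a b).leftInverse.leftInvOn _).image_image, union_comm]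

lemma symmetricExtension_subset_rootMonomials [DecidableEq κ] (hf : Injective f)
    {Y : Set (κ → ℂ)} (hY : Y ⊆ rootMonomials m) :
    symmetricExtension f a b Y ⊆ rootMonomials m := by
  rintro _ (⟨y, hy, rfl⟩ | ⟨_, ⟨y, hy, rfl⟩, rfl⟩) <;> obtain ⟨α, j, hα, rfl⟩ := hY hy <;>
    dsimp only
  · exact ⟨α, f j, hα, extend_smul_single hf α j⟩
  · exact ⟨α, _, hα, by rw [extend_smul_single hf, smul_single_comp_equiv]⟩

lemma deleteAxis_symmetricExtension [DecidableEq κ] (hm : m ≠ 0) (hf : Injective f)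
    (hrange : range f = {b}ᶜ) {Y : Set (κ → ℂ)} (hY : Y ⊆ rootMonomials m) :
    deleteAxis f b (symmetricExtension f a b Y) = Y := by
  apply Subset.antisymm
  · rintro _ ⟨_, ⟨⟨y, hy, rfl⟩ | ⟨_, ⟨y, hy, rfl⟩, rfl⟩, hvb⟩, rfl⟩ <;> dsimp only at hvb ⊢
    · rwa [extend_comp hf]
    · obtain ⟨α, j, -, rfl⟩ := hY hy
      have hjb : f j ≠ b := hrange.subset (mem_range_self j)
      have hja : f j ≠ a := by
        rintro hja
        rw [extend_smul_single hf, smul_single_comp_equiv, Equiv.symm_swap, hja,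
          Equiv.swap_apply_left] at hvb
        exact hvb (smul_single_mem_axisLine α b)
      rwa [extend_smul_single hf, smul_single_comp_equiv, Equiv.symm_swap,
        Equiv.swap_apply_of_ne_of_ne hja hjb, smul_single_comp_of_injective hf]
  · intro y hy
    refine ⟨extend f y 0, ⟨Or.inl (mem_image_of_mem _ hy), ?_⟩, extend_comp hf y 0⟩
    obtain ⟨α, j, hα, rfl⟩ := hY hy
    rw [extend_smul_single hf, smul_single_mem_axisLine_iff (IsUnit.of_pow_eq_one hα hm).ne_zero]
    exact hrange.subset (mem_range_self j)

lemma symmetricExtension_deleteAxis [DecidableEq κ] (hm : m ≠ 0) (hab : a ≠ b)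
    (hf : Injective f) (hrange : range f = {b}ᶜ) {X : Set (ι → ℂ)} (hX : X ⊆ rootMonomials m)
    (hfix : (· ∘ Equiv.swap a b) '' X = X) : symmetricExtension f a b (deleteAxis f b X) = X := by
  have hinv : LeftInvOn (extend f · (0 : ι → ℂ)) (· ∘ f) (X \ axisLine b) := fun v hv =>
    extend_comp_of_notMem_axisLine hf hrange (hX hv.1) hv.2
  rw [symmetricExtension, deleteAxis, hinv.image_image]
  apply Subset.antisymm
  · exact union_subset sdiff_subset ((image_mono sdiff_subset).trans hfix.subset)
  · intro v hv
    by_cases hvb : v ∈ axisLine b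
    · exact Or.inr ⟨_, comp_swap_mem_sdiff_axisLine hm hab hX hfix hv hvb,
        comp_swap_involutive a b v⟩
    · exact Or.inl ⟨hv, hvb⟩

lemma OnePerAxis.of_deleteAxis [DecidableEq κ] (hm : m ≠ 0) (hab : a ≠ b) (hf : Injective f)
    (hrange : range f = {b}ᶜ) {V : Set (ι → ℂ)} (hV : V ⊆ rootMonomials m)
    (hfix : (· ∘ Equiv.swap a b) '' V = V) (hsep : OnePerAxis (deleteAxis f b V)) :
    OnePerAxis V := by
  have hsep_off : ∀ i ≠ b, (V ∩ axisLine i).Subsingleton := by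
    intro i hib
    obtain ⟨j, rfl⟩ := hrange.superset hib
    have hmem : ∀ v ∈ V ∩ axisLine (f j), v ∉ axisLine b ∧ v ∘ f ∈ axisLine j := by
      rintro v ⟨hvV, hvj⟩
      obtain ⟨α, -, hα0, rfl⟩ := exists_eq_smul_single_of_mem_axisLine hm (hV hvV) hvj
      rw [smul_single_mem_axisLine_iff hα0, smul_single_comp_of_injective hf]
      exact ⟨hib, smul_single_mem_axisLine α j⟩
    intro v hv w hw
    rw [← extend_comp_of_notMem_axisLine hf hrange (hV hv.1) (hmem v hv).1,
      ← extend_comp_of_notMem_axisLine hf hrange (hV hw.1) (hmem w hw).1,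
      hsep j ⟨mem_image_of_mem _ ⟨hv.1, (hmem v hv).1⟩, (hmem v hv).2⟩
        ⟨mem_image_of_mem _ ⟨hw.1, (hmem w hw).1⟩, (hmem w hw).2⟩]
  intro i
  rcases eq_or_ne b i with rfl | hbi
  · have hswap : ∀ v ∈ V ∩ axisLine b, v ∘ Equiv.swap a b ∈ V ∩ axisLine a := fun v hv =>
      ⟨hfix ▸ mem_image_of_mem _ hv.1, by
        simpa using comp_equiv_mem_axisLine (Equiv.swap a b) hv.2⟩
    exact fun v hv w hw =>
      (comp_swap_involutive a b).injective (hsep_off a hab (hswap v hv) (hswap w hw))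
  · exact hsep_off i hbi.symm

lemma ncard_le_ncard_deleteAxis_add_one [DecidableEq κ] (hf : Injective f)
    (hrange : range f = {b}ᶜ) {V : Set (ι → ℂ)} (hV : V ⊆ rootMonomials m) (hsep : OnePerAxis V)
    (hfin : V.Finite) : V.ncard ≤ (deleteAxis f b V).ncard + 1 := by
  rw [← ncard_deleteAxis_add_ncard_inter hf hrange hV hfin]
  exact Nat.add_le_add_left ((ncard_le_one (hsep b).finite).2 (hsep b)) _

end Reflection

lemma mem_monoPoset_iff {m N : ℕ} {X : Set (Fin N → ℂ)} :
    X ∈ monoPoset m N ↔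
      X.Nonempty ∧ X.Finite ∧ X.ncard ≤ N - 1 ∧ X ⊆ rootMonomials m ∧ OnePerAxis X := by
  constructor
  · rintro ⟨hne, hfin, hcard, hroot, hsep⟩
    exact ⟨hne, hfin, hcard, hroot,
      fun i v ⟨hv, α, hvα⟩ w ⟨hw, β, hwβ⟩ => hsep v hv w hw α β i hvα hwβ⟩
  · rintro ⟨hne, hfin, hcard, hroot, hsep⟩
    exact ⟨hne, hfin, hcard, hroot,
      fun v hv w hw α β i hvα hwβ => hsep i ⟨hv, α, hvα⟩ ⟨hw, β, hwβ⟩⟩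

lemma subset_rootMonomials_of_mem_monoPoset {m N : ℕ} {X : Set (Fin N → ℂ)}
    (hX : X ∈ monoPoset m N) : X ⊆ rootMonomials m :=
  hX.2.2.2.1

section MonoPoset

variable {m n : ℕ} {a b : Fin n} {f : Fin (n - 1) → Fin n}

lemma deleteAxis_mem_monoPoset (hm : m ≠ 0) (hab : a ≠ b) (hf : Injective f)
    (hrange : range f = {b}ᶜ) {X : Set (Fin n → ℂ)} (hX : X ∈ monoPoset m n)
    (hfix : (· ∘ Equiv.swap a b) '' X = X) : deleteAxis f b X ∈ monoPoset m (n - 1) := by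
  rw [mem_monoPoset_iff] at hX ⊢
  obtain ⟨hne, hfin, hcard, hroot, hsep⟩ := hX
  refine ⟨deleteAxis_nonempty hm hab hroot hfix hne, hfin.sdiff.image _, ?_,
    deleteAxis_subset_rootMonomials hf hrange hroot, onePerAxis_deleteAxis hf hrange hroot hsep⟩
  have := ncard_deleteAxis_le hf hrange hab hroot hsep hfix hfin (by simpa using hcard)
  simp only [Fintype.card_fin] at this
  omega

lemma symmetricExtension_mem_monoPoset (hm : m ≠ 0) (hab : a ≠ b) (hf : Injective f)
    (hrange : range f = {b}ᶜ) {Y : Set (Fin (n - 1) → ℂ)} (hY : Y ∈ monoPoset m (n - 1)) :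
    symmetricExtension f a b Y ∈ monoPoset m n := by
  rw [mem_monoPoset_iff] at hY ⊢
  obtain ⟨hne, hfin, hcard, hroot, hsep⟩ := hY
  have hVroot := symmetricExtension_subset_rootMonomials (a := a) (b := b) hf hroot
  have hFV := deleteAxis_symmetricExtension (a := a) hm hf hrange hroot
  have hVfin : (symmetricExtension f a b Y).Finite :=
    (hfin.image _).union ((hfin.image _).image _)
  have hVsep : OnePerAxis (symmetricExtension f a b Y) :=
    .of_deleteAxis hm hab hf hrange hVroot (swap_image_symmetricExtension (f := f) Y) (by rwa [hFV])
  refine ⟨(hne.image _).mono subset_union_left, hVfin, ?_, hVroot, hVsep⟩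
  have hcardV := ncard_le_ncard_deleteAxis_add_one hf hrange hVroot hVsep hVfin
  have hpos := (ncard_pos hfin).2 hne
  rw [hFV] at hcardV
  omega

def fixedDeleteAxisOrderIso (hm : m ≠ 0) (hab : a ≠ b) (hf : Injective f)
    (hrange : range f = {b}ᶜ) :
    {X : Set (Fin n → ℂ) // X ∈ monoPoset m n ∧ (· ∘ Equiv.swap a b) '' X = X} ≃o
      {Y : Set (Fin (n - 1) → ℂ) // Y ∈ monoPoset m (n - 1)} :=
  Equiv.toOrderIso
    { toFun := fun X => ⟨deleteAxis f b X, deleteAxis_mem_monoPoset hm hab hf hrange X.2.1 X.2.2⟩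
      invFun := fun Y => ⟨symmetricExtension f a b Y,
        symmetricExtension_mem_monoPoset hm hab hf hrange Y.2,
          swap_image_symmetricExtension (a := a) (b := b) (f := f) Y⟩
      left_inv := fun X => Subtype.ext <|
        symmetricExtension_deleteAxis hm hab hf hrange
          (subset_rootMonomials_of_mem_monoPoset X.2.1) X.2.2
      right_inv := fun Y => Subtype.ext <|
        deleteAxis_symmetricExtension hm hf hrange (subset_rootMonomials_of_mem_monoPoset Y.2) }
    (fun _ _ h => deleteAxis_mono h) (fun _ _ h => symmetricExtension_mono h)

end MonoPoset

theorem stmt_7 (m n : ℕ) (hm : 2 ≤ m) (hn : 2 ≤ n) :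
    ∃ φ : {X : Set (Fin n → ℂ) // X ∈ monoPoset m n ∧
            (fun v : Fin n → ℂ =>
              v ∘ Equiv.swap (⟨n - 2, by omega⟩ : Fin n) (⟨n - 1, by omega⟩ : Fin n)) '' X = X}
          ≃o {Y : Set (Fin (n - 1) → ℂ) // Y ∈ monoPoset m (n - 1)},
      ∀ X, ((φ X : Set (Fin (n - 1) → ℂ))) =
        (fun v : Fin n → ℂ => v ∘ Fin.castLE (by omega : n - 1 ≤ n)) ''
          ((X : Set (Fin n → ℂ)) \
            {w | ∃ c : ℂ, w = c • (Pi.single (⟨n - 1, by omega⟩ : Fin n) 1 : Fin n → ℂ)}) := by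
  have hab : (⟨n - 2, by omega⟩ : Fin n) ≠ ⟨n - 1, by omega⟩ := by
    rw [Ne, Fin.mk.injEq]
    omega
  have hrange : range (Fin.castLE (by omega : n - 1 ≤ n)) = {⟨n - 1, by omega⟩}ᶜ := by
    ext i
    simp only [Fin.range_castLE, mem_ofPred_eq, mem_compl_iff, mem_singleton_iff, Fin.ext_iff]
    omega
  exact ⟨fixedDeleteAxisOrderIso (by omega) hab (Fin.castLE_injective _) hrange, fun _ => rfl⟩
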